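/- arXiv:1808.10621 — 2 statements merged into one kernel-verified Lean document; each statement's English description precedes it below -/
import Mathlib

section
/- Let Ω ⊆ ℝ² be a bounded open set whose frontier ∂Ω does not contain the origin, let r > 0, and let T be the inversion in the sphere of radius r centered at the origin. Let σ be the 1-dimensional Hausdorff measure restricted to ∂Ω, σ* the 1-dimensional Hausdorff measure restricted to ∂Ω* := T(∂Ω), φ : ℝ² → ℝ bounded and Borel measurable with σ(∂Ω) < ∞, and define φ* on ∂Ω* by φ*(T y) := φ(y)|y|²/r². Then for every x ∈ ℝ² with x ≠ 0 such that y ↦ Γ(x − y)φ(y) and y ↦ Γ(y)φ(y) are σ-integrable, ∫_{∂Ω*} Γ(Tx − z) φ*(z) dσ*(z) = ∫_{∂Ω} Γ(x − y) φ(y) dσ(y) − ∫_{∂Ω} Γ(y) φ(y) dσ(y) + (∫_{∂Ω} φ dσ) ((1/(2π)) log(r²) − Γ(x)), where Γ(z) = (1/(2π)) log|z|. -/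
/-!
Inversion is conformal: by `dist (T y) (T z) = R² dist y z / (dist y c * dist z c)`, on an annulus
`a ≤ dist y c ≤ t a` it is Lipschitz with constant `R² / a²`, and its inverse (itself) is Lipschitz
with constant `t² a² / R²` on the image. Cutting a set into annuli of ratio `t` and letting `t → 1`
gives the change of variables `dμH[d](T y) = (R² / |y - c|²)^d dμH[d](y)`. In the potential, the
kernel transforms as `log |Tx - Ty| = log r² + log |x - y| - log |x| - log |y|`, and the Jacobian
`r² / |y|²` cancels against the factor `|y|² / r²` in `φ*`; integrating the four terms gives the
formula.
-/

open MeasureTheory Set EuclideanGeometry Filter Topology Function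
open scoped Real ENNReal

theorem MeasureTheory.measure_le_mul_of_forall_Ico_zpow {α : Type*} [MeasurableSpace α]
    {ν₁ ν₂ : Measure α} {g : α → ℝ} (hg : Measurable g) {s : Set α} (hs : MeasurableSet s)
    (hg0 : ∀ x ∈ s, 0 < g x) {t : ℝ} (ht : 1 < t) {k : ℝ≥0∞}
    (h : ∀ n : ℤ, ν₁ (s ∩ g ⁻¹' Ico (t ^ n) (t ^ (n + 1))) ≤
      k * ν₂ (s ∩ g ⁻¹' Ico (t ^ n) (t ^ (n + 1)))) :
    ν₁ s ≤ k * ν₂ s := by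
  have hcover : s = ⋃ n : ℤ, s ∩ g ⁻¹' Ico (t ^ n) (t ^ (n + 1)) := by
    refine Subset.antisymm (fun x hx => ?_) (iUnion_subset fun _ => inter_subset_left)
    obtain ⟨n, hn⟩ := exists_mem_Ico_zpow (hg0 x hx) ht
    exact mem_iUnion.2 ⟨n, hx, hn⟩
  have hdisj : Pairwise (Disjoint on fun n : ℤ => s ∩ g ⁻¹' Ico (t ^ n) (t ^ (n + 1))) := by
    refine ((zpow_right_mono₀ ht.le).pairwise_disjoint_on_Ico_succ).mono fun m n h => ?_
    simp only [Order.succ_eq_add_one] at h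
    exact (h.preimage g).mono inter_subset_right inter_subset_right
  have hmeas : ∀ n : ℤ, MeasurableSet (s ∩ g ⁻¹' Ico (t ^ n) (t ^ (n + 1))) :=
    fun n => hs.inter (hg measurableSet_Ico)
  rw [hcover, measure_iUnion hdisj hmeas, measure_iUnion hdisj hmeas, ← ENNReal.tsum_mul_left]
  exact ENNReal.tsum_le_tsum h

theorem ENNReal.le_of_forall_one_lt_le_ofReal_sq_rpow_mul {x y : ℝ≥0∞} {d : ℝ}
    (h : ∀ t : ℝ, 1 < t → x ≤ ENNReal.ofReal (t ^ 2) ^ d * y) : x ≤ y := by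
  rcases eq_or_ne y ∞ with rfl | hy
  · exact le_top
  have hF : Tendsto (fun t : ℝ => ENNReal.ofReal (t ^ 2) ^ d) (𝓝[>] 1) (𝓝 1) := by
    have := ((ENNReal.continuous_rpow_const (y := d)).comp
      (ENNReal.continuous_ofReal.comp (continuous_pow 2))).tendsto (1 : ℝ)
    simpa [Function.comp_def] using this.mono_left nhdsWithin_le_nhds
  simpa using ge_of_tendsto (ENNReal.Tendsto.mul_const hF (.inr hy))
    (eventually_nhdsWithin_of_forall h)

section Inversion

variable {V P : Type*} [NormedAddCommGroup V] [InnerProductSpace ℝ V] [MetricSpace P]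
  [NormedAddTorsor V P] {c : P} {R : ℝ}

theorem EuclideanGeometry.lipschitzOnWith_inversion {s : Set P} {a : ℝ} (ha : 0 < a)
    (hs : ∀ y ∈ s, a ≤ dist y c) :
    LipschitzOnWith (R ^ 2 / a ^ 2).toNNReal (inversion c R) s := by
  refine LipschitzOnWith.of_dist_le_mul fun y hy z hz => ?_
  have hy' := hs y hy
  have hz' := hs z hz
  rw [dist_inversion_inversion (dist_pos.1 (ha.trans_le hy'))
    (dist_pos.1 (ha.trans_le hz')), Real.coe_toNNReal _ (by positivity)]
  gcongr
  calc a ^ 2 = a * a := sq a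
    _ ≤ dist y c * dist z c := by gcongr

theorem EuclideanGeometry.log_dist_inversion_inversion {x y : P} (hx : x ≠ c) (hy : y ≠ c)
    (hxy : x ≠ y) (hR : R ≠ 0) :
    Real.log (dist (inversion c R x) (inversion c R y)) =
      Real.log (R ^ 2) + Real.log (dist x y) - Real.log (dist x c) - Real.log (dist y c) := by
  have hxc := dist_ne_zero.2 hx
  have hyc := dist_ne_zero.2 hy
  rw [dist_inversion_inversion hx hy, Real.log_mul (by positivity) (dist_ne_zero.2 hxy),
    Real.log_div (by positivity) (by positivity), Real.log_mul hxc hyc]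
  ring

theorem EuclideanGeometry.inversion_zero_eq (R : ℝ) (x : V) :
    inversion (0 : V) R x = (R ^ 2 / ‖x‖ ^ 2) • x := by
  simp [inversion, div_pow]

variable [MeasurableSpace P] [BorelSpace P]

theorem EuclideanGeometry.measurable_inversion (c : P) (R : ℝ) : Measurable (inversion c R) :=
  measurable_of_continuousOn_compl_singleton c <|
    continuousOn_const.inversion continuousOn_const continuousOn_id fun _ h => h

theorem EuclideanGeometry.measurableEmbedding_inversion (c : P) (hR : R ≠ 0) :
    MeasurableEmbedding (inversion c R) :=
  (MeasurableEquiv.ofInvolutive _ (inversion_involutive c hR)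
    (measurable_inversion c R)).measurableEmbedding

theorem EuclideanGeometry.hausdorffMeasure_image_inversion_le {d : ℝ} (hd : 0 ≤ d) {s : Set P}
    {a : ℝ} (ha : 0 < a) (hs : ∀ y ∈ s, a ≤ dist y c) :
    μH[d] (inversion c R '' s) ≤ ENNReal.ofReal (R ^ 2 / a ^ 2) ^ d * μH[d] s :=
  (lipschitzOnWith_inversion ha hs).hausdorffMeasure_image_le hd

theorem EuclideanGeometry.hausdorffMeasure_image_inversion_le_mul_setLIntegral {d : ℝ}
    (hd : 0 ≤ d) {A : Set P} {a t : ℝ} (ha : 0 < a) (ht : 0 < t)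
    (hA : ∀ y ∈ A, a ≤ dist y c ∧ dist y c ≤ t * a) :
    μH[d] (inversion c R '' A) ≤
      ENNReal.ofReal (t ^ 2) ^ d * ∫⁻ y in A, ENNReal.ofReal (R ^ 2 / dist y c ^ 2) ^ d ∂μH[d] :=
  calc μH[d] (inversion c R '' A)
      ≤ ENNReal.ofReal (R ^ 2 / a ^ 2) ^ d * μH[d] A :=
        hausdorffMeasure_image_inversion_le hd ha fun y hy => (hA y hy).1
    _ = ENNReal.ofReal (t ^ 2) ^ d * (ENNReal.ofReal (R ^ 2 / (t * a) ^ 2) ^ d * μH[d] A) := by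
        rw [← mul_assoc, ← ENNReal.mul_rpow_of_nonneg _ _ hd, ← ENNReal.ofReal_mul (by positivity)]
        field_simp
    _ ≤ ENNReal.ofReal (t ^ 2) ^ d *
          ∫⁻ y in A, ENNReal.ofReal (R ^ 2 / dist y c ^ 2) ^ d ∂μH[d] := by
        rw [← setLIntegral_const]
        refine mul_le_mul_right (setLIntegral_mono (by measurability) fun y hy => ?_) _
        gcongr
        · exact pow_pos (ha.trans_le (hA y hy).1) 2
        · exact (hA y hy).2

theorem EuclideanGeometry.setLIntegral_le_mul_hausdorffMeasure_image_inversion (hR : R ≠ 0)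
    {d : ℝ} (hd : 0 ≤ d) {A : Set P} {a t : ℝ} (ha : 0 < a) (ht : 0 < t)
    (hA : ∀ y ∈ A, a ≤ dist y c ∧ dist y c ≤ t * a) :
    ∫⁻ y in A, ENNReal.ofReal (R ^ 2 / dist y c ^ 2) ^ d ∂μH[d] ≤
      ENNReal.ofReal (t ^ 2) ^ d * μH[d] (inversion c R '' A) := by
  have himage : ∀ z ∈ inversion c R '' A, R ^ 2 / (t * a) ≤ dist z c := by
    rintro _ ⟨y, hy, rfl⟩
    rw [dist_inversion_center]
    gcongr
    · exact ha.trans_le (hA y hy).1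
    · exact (hA y hy).2
  calc ∫⁻ y in A, ENNReal.ofReal (R ^ 2 / dist y c ^ 2) ^ d ∂μH[d]
      ≤ ∫⁻ _ in A, ENNReal.ofReal (R ^ 2 / a ^ 2) ^ d ∂μH[d] := by
        refine setLIntegral_mono measurable_const fun y hy => ?_
        gcongr
        exact (hA y hy).1
    _ = ENNReal.ofReal (R ^ 2 / a ^ 2) ^ d * μH[d] (inversion c R '' (inversion c R '' A)) := by
        rw [setLIntegral_const, (inversion_involutive c hR).leftInverse.image_image]
    _ ≤ ENNReal.ofReal (R ^ 2 / a ^ 2) ^ d *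
          (ENNReal.ofReal (R ^ 2 / (R ^ 2 / (t * a)) ^ 2) ^ d * μH[d] (inversion c R '' A)) := by
        gcongr
        exact hausdorffMeasure_image_inversion_le hd (by positivity) himage
    _ = ENNReal.ofReal (t ^ 2) ^ d * μH[d] (inversion c R '' A) := by
        rw [← mul_assoc, ← ENNReal.mul_rpow_of_nonneg _ _ hd, ← ENNReal.ofReal_mul (by positivity)]
        field_simp

theorem EuclideanGeometry.hausdorffMeasure_image_inversion (hR : R ≠ 0) {d : ℝ} (hd : 0 ≤ d)
    {s : Set P} (hs : MeasurableSet s) (hc : c ∉ s) :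
    μH[d] (inversion c R '' s) = ∫⁻ y in s, ENNReal.ofReal (R ^ 2 / dist y c ^ 2) ^ d ∂μH[d] := by
  set ν₁ := μH[d].map (inversion c R)
  set ν₂ := μH[d].withDensity fun y => ENNReal.ofReal (R ^ 2 / dist y c ^ 2) ^ d
  have hν₁ : ∀ A, MeasurableSet A → μH[d] (inversion c R '' A) = ν₁ A := fun A hA => by
    rw [Measure.map_apply (measurable_inversion c R) hA,
      (inversion_involutive c hR).image_eq_preimage_symm]
  have hν₂ : ∀ A, MeasurableSet A →
      ∫⁻ y in A, ENNReal.ofReal (R ^ 2 / dist y c ^ 2) ^ d ∂μH[d] = ν₂ A :=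
    fun A hA => (withDensity_apply _ hA).symm
  have hdist : Measurable fun y => dist y c := (continuous_id.dist continuous_const).measurable
  have hpos : ∀ y ∈ s, 0 < dist y c := fun y hy => dist_pos.2 (ne_of_mem_of_not_mem hy hc)
  have hpiece : ∀ {t : ℝ}, 1 < t → ∀ n : ℤ,
      MeasurableSet (s ∩ (dist · c) ⁻¹' Ico (t ^ n) (t ^ (n + 1))) ∧
      ∀ y ∈ s ∩ (dist · c) ⁻¹' Ico (t ^ n) (t ^ (n + 1)),
        t ^ n ≤ dist y c ∧ dist y c ≤ t * t ^ n := fun ht n =>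
    ⟨hs.inter (hdist measurableSet_Ico), fun y hy => ⟨hy.2.1, by
      rw [← zpow_one_add₀ (by positivity), add_comm]; exact hy.2.2.le⟩⟩
  rw [hν₁ s hs, hν₂ s hs]
  apply le_antisymm <;>
    refine ENNReal.le_of_forall_one_lt_le_ofReal_sq_rpow_mul (d := d) fun t ht =>
      measure_le_mul_of_forall_Ico_zpow hdist hs hpos ht fun n => ?_ <;>
    rw [← hν₁ _ (hpiece ht n).1, ← hν₂ _ (hpiece ht n).1]
  · exact hausdorffMeasure_image_inversion_le_mul_setLIntegral hd (by positivity) (by positivity)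
      (hpiece ht n).2
  · exact setLIntegral_le_mul_hausdorffMeasure_image_inversion hR hd (by positivity)
      (by positivity) (hpiece ht n).2

theorem EuclideanGeometry.restrict_image_inversion_hausdorffMeasure (hR : R ≠ 0) {d : ℝ}
    (hd : 0 ≤ d) {s : Set P} (hs : MeasurableSet s) (hc : c ∉ s) :
    μH[d].restrict (inversion c R '' s) =
      ((μH[d].restrict s).withDensity
        fun y => ENNReal.ofReal (R ^ 2 / dist y c ^ 2) ^ d).map (inversion c R) := by
  ext A hA
  have hpre : MeasurableSet (inversion c R ⁻¹' A) := measurable_inversion c R hA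
  rw [Measure.restrict_apply hA, Measure.map_apply (measurable_inversion c R) hA,
    withDensity_apply _ hpre, Measure.restrict_restrict hpre,
    ← hausdorffMeasure_image_inversion hR hd (hpre.inter hs) fun h => hc h.2,
    inter_comm _ s, image_inter_preimage, inter_comm]

theorem EuclideanGeometry.integral_image_inversion_hausdorffMeasure {E : Type*}
    [NormedAddCommGroup E] [NormedSpace ℝ E] (hR : R ≠ 0) {d : ℝ} (hd : 0 ≤ d) {s : Set P}
    (hs : MeasurableSet s) (hc : c ∉ s) (g : P → E) :
    ∫ z in inversion c R '' s, g z ∂μH[d] =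
      ∫ y in s,
        (ENNReal.ofReal (R ^ 2 / dist y c ^ 2) ^ d).toReal • g (inversion c R y) ∂μH[d] := by
  rw [restrict_image_inversion_hausdorffMeasure hR hd hs hc,
    (measurableEmbedding_inversion c hR).integral_map,
    integral_withDensity_eq_integral_toReal_smul (by measurability)
      (ae_of_all _ fun y => ENNReal.rpow_lt_top_of_nonneg hd ENNReal.ofReal_ne_top)]

end Inversion

theorem single_layer_inversion_dim2_general
    (r : ℝ) (hr : 0 < r) (Ω : Set (EuclideanSpace ℝ (Fin 2)))
    (h0 : (0 : EuclideanSpace ℝ (Fin 2)) ∉ frontier Ω)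
    (T : EuclideanSpace ℝ (Fin 2) → EuclideanSpace ℝ (Fin 2))
    (hT : ∀ x : EuclideanSpace ℝ (Fin 2), x ≠ 0 → T x = (r ^ 2 / ‖x‖ ^ 2) • x)
    (σ σs : Measure (EuclideanSpace ℝ (Fin 2)))
    (hσ : σ = μH[1].restrict (frontier Ω))
    (hσs : σs = μH[1].restrict (T '' frontier Ω))
    (hfin : σ (frontier Ω) < ⊤)
    (φ : EuclideanSpace ℝ (Fin 2) → ℝ) (hφmeas : Measurable φ)
    (hφbdd : ∃ C, ∀ y, |φ y| ≤ C)
    (φs : EuclideanSpace ℝ (Fin 2) → ℝ)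
    (hφs : ∀ y ∈ frontier Ω, φs (T y) = φ y * ‖y‖ ^ 2 / r ^ 2)
    (x : EuclideanSpace ℝ (Fin 2)) (hx : x ≠ 0)
    (hint1 : Integrable (fun y => (1 / (2 * π)) * Real.log ‖x - y‖ * φ y) σ)
    (hint2 : Integrable (fun y => (1 / (2 * π)) * Real.log ‖y‖ * φ y) σ) :
    ∫ z, (1 / (2 * π)) * Real.log ‖T x - z‖ * φs z ∂σs =
      (∫ y, (1 / (2 * π)) * Real.log ‖x - y‖ * φ y ∂σ)
        - (∫ y, (1 / (2 * π)) * Real.log ‖y‖ * φ y ∂σ)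
        + (∫ y, φ y ∂σ) *
            ((1 / (2 * π)) * Real.log (r ^ 2) - (1 / (2 * π)) * Real.log ‖x‖) := by
  have hT_eq : ∀ y, y ≠ 0 → T y = inversion 0 r y := fun y hy => by
    rw [hT y hy, inversion_zero_eq]
  have hK : MeasurableSet (frontier Ω) := isClosed_frontier.measurableSet
  have hσfin : IsFiniteMeasure σ := by
    rw [hσ] at hfin ⊢
    exact isFiniteMeasure_restrict.2 (by simpa using hfin.ne)
  have hφ : Integrable φ σ := by
    obtain ⟨C, hC⟩ := hφbdd
    exact .of_bound hφmeas.aestronglyMeasurable C (ae_of_all _ hC)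
  have hkernel : ∀ᵐ y ∂σ,
      (ENNReal.ofReal (r ^ 2 / dist y 0 ^ 2) ^ (1 : ℝ)).toReal •
          ((1 / (2 * π)) * Real.log ‖T x - inversion 0 r y‖ * φs (inversion 0 r y)) =
        (1 / (2 * π)) * Real.log ‖x - y‖ * φ y - (1 / (2 * π)) * Real.log ‖y‖ * φ y
          + ((1 / (2 * π)) * Real.log (r ^ 2) - (1 / (2 * π)) * Real.log ‖x‖) * φ y := by
    have := Measure.nullSingletonClass_hausdorff (EuclideanSpace ℝ (Fin 2)) one_pos
    rw [hσ]
    filter_upwards [ae_restrict_mem hK, Measure.ae_ne _ x] with y hyK hyx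
    have hy : y ≠ 0 := fun h => h0 (h ▸ hyK)
    rw [← hT_eq y hy, hφs y hyK, hT_eq y hy, hT_eq x hx, ← dist_eq_norm,
      log_dist_inversion_inversion hx hy hyx.symm hr.ne']
    simp only [ENNReal.rpow_one, dist_eq_norm, sub_zero]
    rw [ENNReal.toReal_ofReal (by positivity), smul_eq_mul]
    field_simp
    ring
  rw [hσs, image_congr fun y hy => hT_eq y fun h => h0 (h ▸ hy),
    integral_image_inversion_hausdorffMeasure hr.ne' zero_le_one hK h0, ← hσ,
    integral_congr_ae hkernel, integral_add (by exact hint1.sub hint2) (hφ.const_mul _),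
    integral_sub hint1 hint2, integral_const_mul]
  ring

/-- Transformation of the single layer potential in `ℝ²` under inversion in a sphere
centered at the origin: with `Γ(z) = (1/(2π)) log|z|`, `φ*(Ty) = φ(y)|y|²/r²`,
`S_{∂Ω*}[φ*](Tx) = S_{∂Ω}[φ](x) − S_{∂Ω}[φ](0) + (∫_{∂Ω} φ dσ)(Γ(r²) − Γ(x))`. -/
theorem single_layer_inversion_dim2
    (r : ℝ) (hr : 0 < r) (Ω : Set (EuclideanSpace ℝ (Fin 2)))
    (hopen : IsOpen Ω) (hbd : Bornology.IsBounded Ω)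
    (h0 : (0 : EuclideanSpace ℝ (Fin 2)) ∉ frontier Ω)
    (T : EuclideanSpace ℝ (Fin 2) → EuclideanSpace ℝ (Fin 2))
    (hT : ∀ x : EuclideanSpace ℝ (Fin 2), x ≠ 0 → T x = (r ^ 2 / ‖x‖ ^ 2) • x)
    (σ σs : Measure (EuclideanSpace ℝ (Fin 2)))
    (hσ : σ = μH[1].restrict (frontier Ω))
    (hσs : σs = μH[1].restrict (T '' frontier Ω))
    (hfin : σ (frontier Ω) < ⊤)
    (φ : EuclideanSpace ℝ (Fin 2) → ℝ) (hφmeas : Measurable φ)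
    (hφbdd : ∃ C, ∀ y, |φ y| ≤ C)
    (φs : EuclideanSpace ℝ (Fin 2) → ℝ)
    (hφs : ∀ y ∈ frontier Ω, φs (T y) = φ y * ‖y‖ ^ 2 / r ^ 2)
    (x : EuclideanSpace ℝ (Fin 2)) (hx : x ≠ 0)
    (hint1 : Integrable (fun y => (1 / (2 * π)) * Real.log ‖x - y‖ * φ y) σ)
    (hint2 : Integrable (fun y => (1 / (2 * π)) * Real.log ‖y‖ * φ y) σ) :
    ∫ z, (1 / (2 * π)) * Real.log ‖T x - z‖ * φs z ∂σs =
      (∫ y, (1 / (2 * π)) * Real.log ‖x - y‖ * φ y ∂σ)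
        - (∫ y, (1 / (2 * π)) * Real.log ‖y‖ * φ y ∂σ)
        + (∫ y, φ y ∂σ) *
            ((1 / (2 * π)) * Real.log (r ^ 2) - (1 / (2 * π)) * Real.log ‖x‖) :=
  single_layer_inversion_dim2_general r hr Ω h0 T hT σ σs hσ hσs hfin φ hφmeas hφbdd φs hφs x hx
    hint1 hint2
end

section
/- Let Ω ⊆ ℝ² be a bounded open set with 0 ∉ ∂Ω, r > 0, T the inversion in the sphere of radius r centered at the origin, σ the 1-dimensional Hausdorff measure restricted to ∂Ω, and σ* the 1-dimensional Hausdorff measure restricted to ∂Ω* := T(∂Ω). Let φ, ψ : ℝ² → ℝ be bounded Borel measurable with σ(∂Ω) < ∞, ∫_{∂Ω} φ dσ = 0 and ∫_{∂Ω} ψ dσ = 0, and define φ*(T y) := φ(y)|y|²/r² and ψ*(T y) := ψ(y)|y|²/r² on ∂Ω*. If (x,y) ↦ Γ(x − y)φ(x)ψ(y) is integrable with respect to σ × σ, then ∫_{∂Ω*}∫_{∂Ω*} Γ(w − z) φ*(w) ψ*(z) dσ*(z) dσ*(w) = ∫_{∂Ω}∫_{∂Ω} Γ(x − y) φ(x)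 ψ(y) dσ(y) dσ(x), where Γ(z) = (1/(2π)) log|z|. (Hence in two dimensions φ ↦ φ* preserves the single-layer bilinear form on mean-zero densities.) -/
/-!
Inversion `ι` in the sphere of radius `r` about `c` satisfies
`dist (ι x) (ι y) = r² dist x y / (dist x c * dist y c)`. On an annulus `ρ ≤ dist · c ≤ qρ` it is
therefore Lipschitz with constant `(r/ρ)²`, and the involution `ι` is Lipschitz on the image
annulus with constant `(qρ/r)²`; both constants agree with the conformal factor `(r / dist y c)²`
up to `q²`. Cutting a set into such annuli and letting `q → 1` gives the area formula
`μH[d] (ι '' S) = ∫⁻ y in S, ((r / dist y c)²)^d ∂μH[d]`. For `d = 1` this says exactly that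
`φ* σ*` is the image of `φ σ` under `ι`, so the bilinear form for `(φ*, ψ*)` is the one for
`(φ, ψ)` with kernel `Γ(ι x - ι y) = Γ(x - y) + u(x) + v(y)`, by the distance formula; the
separable terms `u`, `v` integrate to zero against the mean-zero densities.
-/

open MeasureTheory
open scoped Real ENNReal

open Set Filter Topology Function

theorem ENNReal.le_of_forall_one_lt_le_ofReal_sq_rpow_mul_s10 {a b : ℝ≥0∞} {d : ℝ}
    (h : ∀ q : ℝ, 1 < q → a ≤ ENNReal.ofReal (q ^ 2) ^ d * b) : a ≤ b := by
  have hfactor : Tendsto (fun q : ℝ => ENNReal.ofReal (q ^ 2) ^ d) (𝓝[>] 1) (𝓝 1) := by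
    have hcont : Continuous fun q : ℝ => ENNReal.ofReal (q ^ 2) ^ d :=
      ENNReal.continuous_rpow_const.comp (ENNReal.continuous_ofReal.comp (continuous_pow 2))
    simpa only [one_pow, ENNReal.ofReal_one, ENNReal.one_rpow] using
      (hcont.tendsto 1).mono_left nhdsWithin_le_nhds
  have hlim := ENNReal.Tendsto.mul_const hfactor (Or.inl one_ne_zero) (b := b)
  rw [one_mul] at hlim
  exact ge_of_tendsto hlim (eventually_nhdsWithin_of_forall h)

theorem measure_le_mul_of_forall_annulus {X : Type*} [MetricSpace X] [MeasurableSpace X]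
    [OpensMeasurableSpace X] {c : X} {ν₁ ν₂ : Measure X} {S : Set X} (hS : MeasurableSet S)
    (hcS : c ∉ S) {q : ℝ} (hq : 1 < q) {a : ℝ≥0∞}
    (h : ∀ ρ > 0, ∀ T ⊆ S, MeasurableSet T → (∀ x ∈ T, ρ ≤ dist x c ∧ dist x c ≤ q * ρ) →
      ν₁ T ≤ a * ν₂ T) :
    ν₁ S ≤ a * ν₂ S := by
  set A : ℤ → Set X := fun n => S ∩ (dist · c) ⁻¹' Ico (q ^ n) (q ^ (n + 1))
  have hA : ∀ n, MeasurableSet (A n) := fun n =>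
    hS.inter ((continuous_id.dist continuous_const).measurable measurableSet_Ico)
  have hdisj : Pairwise (Disjoint on A) := pairwise_disjoint_on A |>.2 fun m n hmn =>
    disjoint_left.2 fun x hxm hxn => (hxm.2.2.trans_le
      ((zpow_le_zpow_right₀ hq.le (Int.add_one_le_iff.2 hmn)).trans hxn.2.1)).false
  have hcover : ⋃ n, A n = S := by
    refine (iUnion_subset fun n => inter_subset_left).antisymm fun x hx => ?_
    obtain ⟨n, hn⟩ := exists_mem_Ico_zpow (dist_pos.2 (ne_of_mem_of_not_mem hx hcS)) hq
    exact mem_iUnion.2 ⟨n, hx, hn⟩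
  rw [← hcover, measure_iUnion hdisj hA, measure_iUnion hdisj hA, ← ENNReal.tsum_mul_left]
  refine ENNReal.tsum_le_tsum fun n => h _ (zpow_pos (zero_lt_one.trans hq) n) _
    inter_subset_left (hA n) fun x hx => ⟨hx.2.1, ?_⟩
  rw [mul_comm, ← zpow_add_one₀ (zero_lt_one.trans hq).ne']
  exact hx.2.2.le

namespace EuclideanGeometry

variable {V P : Type*} [NormedAddCommGroup V] [InnerProductSpace ℝ V] [MetricSpace P]
  [NormedAddTorsor V P] {c : P} {r : ℝ}

theorem lipschitzOnWith_inversion_s10 {ρ : ℝ} (hρ : 0 < ρ) :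
    LipschitzOnWith (Real.toNNReal ((r / ρ) ^ 2)) (inversion c r) {x | ρ ≤ dist x c} := by
  refine LipschitzOnWith.of_dist_le_mul fun x (hx : ρ ≤ _) y (hy : ρ ≤ _) => ?_
  rw [dist_inversion_inversion (dist_pos.1 (hρ.trans_le hx)) (dist_pos.1 (hρ.trans_le hy)),
    Real.coe_toNNReal _ (sq_nonneg _), div_pow]
  gcongr
  exact sq ρ ▸ mul_le_mul hx hy hρ.le (hρ.le.trans hx)

theorem log_dist_inversion_inversion_s10 {x y : P} (hr : r ≠ 0) (hx : x ≠ c) (hy : y ≠ c)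
    (hxy : x ≠ y) :
    Real.log (dist (inversion c r x) (inversion c r y)) =
      Real.log (dist x y) + (Real.log (r ^ 2) - Real.log (dist x c)) - Real.log (dist y c) := by
  have hxc := dist_ne_zero.2 hx
  have hyc := dist_ne_zero.2 hy
  rw [dist_inversion_inversion hx hy, Real.log_mul (by positivity) (dist_ne_zero.2 hxy),
    Real.log_div (by positivity) (mul_ne_zero hxc hyc), Real.log_mul hxc hyc]
  ring

variable [MeasurableSpace P] [BorelSpace P]

theorem measurable_inversion_s10 : Measurable (inversion c r) :=
  measurable_of_continuousOn_compl_singleton c <|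
    continuousOn_const.inversion continuousOn_const continuousOn_id fun _ hx => hx

theorem measurableEmbedding_inversion_s10 (hr : r ≠ 0) : MeasurableEmbedding (inversion c r) :=
  (MeasurableEquiv.ofInvolutive _ (inversion_involutive c hr)
    measurable_inversion_s10).measurableEmbedding

theorem hausdorffMeasure_inversion_image_le {d ρ : ℝ} (hd : 0 ≤ d) (hρ : 0 < ρ) {S : Set P}
    (hS : ∀ x ∈ S, ρ ≤ dist x c) :
    μH[d] (inversion c r '' S) ≤ ENNReal.ofReal ((r / ρ) ^ 2) ^ d * μH[d] S :=
  ((lipschitzOnWith_inversion_s10 hρ).mono hS).hausdorffMeasure_image_le hd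

theorem measurable_ofReal_div_dist_sq_rpow (d : ℝ) :
    Measurable fun y : P => ENNReal.ofReal ((r / dist y c) ^ 2) ^ d := by
  fun_prop

theorem hausdorffMeasure_inversion_image_le_lintegral {d ρ q : ℝ} (hd : 0 ≤ d) (hρ : 0 < ρ)
    (hq : 1 ≤ q) {S : Set P} (hS : ∀ x ∈ S, ρ ≤ dist x c ∧ dist x c ≤ q * ρ) :
    μH[d] (inversion c r '' S) ≤
      ENNReal.ofReal (q ^ 2) ^ d * ∫⁻ y in S, ENNReal.ofReal ((r / dist y c) ^ 2) ^ d ∂μH[d] := by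
  have hdensity : ∀ y ∈ S, ENNReal.ofReal ((r / (q * ρ)) ^ 2) ^ d ≤
      ENNReal.ofReal ((r / dist y c) ^ 2) ^ d := fun y hy => by
    refine ENNReal.rpow_le_rpow (ENNReal.ofReal_le_ofReal ?_) hd
    rw [div_pow, div_pow]
    gcongr
    exacts [pow_pos (hρ.trans_le (hS y hy).1) 2, (hS y hy).2]
  calc μH[d] (inversion c r '' S) ≤ ENNReal.ofReal ((r / ρ) ^ 2) ^ d * μH[d] S :=
        hausdorffMeasure_inversion_image_le hd hρ fun x hx => (hS x hx).1
    _ = ENNReal.ofReal (q ^ 2) ^ d * (ENNReal.ofReal ((r / (q * ρ)) ^ 2) ^ d * μH[d] S) := by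
        rw [← mul_assoc, ← ENNReal.mul_rpow_of_nonneg _ _ hd, ← ENNReal.ofReal_mul (sq_nonneg _)]
        congr 3
        field_simp
    _ ≤ ENNReal.ofReal (q ^ 2) ^ d * ∫⁻ y in S, ENNReal.ofReal ((r / dist y c) ^ 2) ^ d ∂μH[d] := by
        rw [← setLIntegral_const]
        gcongr _ * ?_
        exact setLIntegral_mono (measurable_ofReal_div_dist_sq_rpow d) hdensity

theorem lintegral_le_hausdorffMeasure_inversion_image {d ρ q : ℝ} (hr : r ≠ 0) (hd : 0 ≤ d)
    (hρ : 0 < ρ) (hq : 1 ≤ q) {S : Set P} (hS : ∀ x ∈ S, ρ ≤ dist x c ∧ dist x c ≤ q * ρ) :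
    ∫⁻ y in S, ENNReal.ofReal ((r / dist y c) ^ 2) ^ d ∂μH[d] ≤
      ENNReal.ofReal (q ^ 2) ^ d * μH[d] (inversion c r '' S) := by
  have hdensity : ∀ y ∈ S, ENNReal.ofReal ((r / dist y c) ^ 2) ^ d ≤
      ENNReal.ofReal ((r / ρ) ^ 2) ^ d := fun y hy => by
    refine ENNReal.rpow_le_rpow (ENNReal.ofReal_le_ofReal ?_) hd
    rw [div_pow, div_pow]
    gcongr
    exact (hS y hy).1
  have hdist : ∀ x ∈ inversion c r '' S, r ^ 2 / (q * ρ) ≤ dist x c := by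
    rintro _ ⟨y, hy, rfl⟩
    rw [dist_inversion_center]
    gcongr
    exacts [hρ.trans_le (hS y hy).1, (hS y hy).2]
  have hS' : μH[d] S ≤ ENNReal.ofReal ((r / (r ^ 2 / (q * ρ))) ^ 2) ^ d *
      μH[d] (inversion c r '' S) := by
    simpa only [Set.image_image, inversion_inversion c hr, Set.image_id'] using
      hausdorffMeasure_inversion_image_le (r := r) hd (by positivity) hdist
  calc ∫⁻ y in S, ENNReal.ofReal ((r / dist y c) ^ 2) ^ d ∂μH[d]
      ≤ ENNReal.ofReal ((r / ρ) ^ 2) ^ d * μH[d] S := by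
        rw [← setLIntegral_const]
        exact setLIntegral_mono measurable_const hdensity
    _ ≤ ENNReal.ofReal ((r / ρ) ^ 2) ^ d *
        (ENNReal.ofReal ((r / (r ^ 2 / (q * ρ))) ^ 2) ^ d * μH[d] (inversion c r '' S)) := by
        gcongr
    _ = ENNReal.ofReal (q ^ 2) ^ d * μH[d] (inversion c r '' S) := by
        rw [← mul_assoc, ← ENNReal.mul_rpow_of_nonneg _ _ hd, ← ENNReal.ofReal_mul (sq_nonneg _)]
        congr 3
        field_simp

theorem hausdorffMeasure_inversion_image {d : ℝ} (hr : r ≠ 0) (hd : 0 ≤ d) {S : Set P}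
    (hS : MeasurableSet S) (hcS : c ∉ S) :
    μH[d] (inversion c r '' S) = ∫⁻ y in S, ENNReal.ofReal ((r / dist y c) ^ 2) ^ d ∂μH[d] := by
  have himage : ∀ T, μH[d].map (inversion c r) T = μH[d] (inversion c r '' T) := fun T => by
    rw [(measurableEmbedding_inversion_s10 hr).map_apply,
      (inversion_involutive c hr).image_eq_preimage_symm]
  rw [← himage, ← withDensity_apply _ hS]
  refine le_antisymm (ENNReal.le_of_forall_one_lt_le_ofReal_sq_rpow_mul_s10 (d := d) fun q hq => ?_)
    (ENNReal.le_of_forall_one_lt_le_ofReal_sq_rpow_mul_s10 (d := d) fun q hq => ?_) <;>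
  refine measure_le_mul_of_forall_annulus hS hcS hq fun ρ hρ T _ hT hTρ => ?_ <;>
  rw [himage, withDensity_apply _ hT]
  · exact hausdorffMeasure_inversion_image_le_lintegral hd hρ hq.le hTρ
  · exact lintegral_le_hausdorffMeasure_inversion_image hr hd hρ hq.le hTρ

theorem setIntegral_inversion_image {E : Type*} [NormedAddCommGroup E] [NormedSpace ℝ E] {d : ℝ}
    (hr : r ≠ 0) (hd : 0 ≤ d) {K : Set P} (hK : MeasurableSet K) (hcK : c ∉ K) (g : P → E) :
    ∫ z in inversion c r '' K, g z ∂μH[d] =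
      ∫ y in K, ((r / dist y c) ^ 2) ^ d • g (inversion c r y) ∂μH[d] := by
  have hmap : ((μH[d].restrict K).withDensity
      fun y => ENNReal.ofReal ((r / dist y c) ^ 2) ^ d).map (inversion c r) =
        μH[d].restrict (inversion c r '' K) := by
    ext A hA
    have hA' : MeasurableSet (inversion c r ⁻¹' A) := measurable_inversion_s10 hA
    rw [(measurableEmbedding_inversion_s10 hr).map_apply, withDensity_apply _ hA',
      Measure.restrict_apply hA, ← image_preimage_inter,
      hausdorffMeasure_inversion_image hr hd (hA'.inter hK) fun h => hcK h.2,
      Measure.restrict_restrict hA']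
  rw [← hmap, (measurableEmbedding_inversion_s10 hr).integral_map,
    integral_withDensity_eq_integral_toReal_smul (measurable_ofReal_div_dist_sq_rpow d)
      (ae_of_all _ fun y => ENNReal.rpow_lt_top_of_nonneg hd ENNReal.ofReal_ne_top)]
  simp only [← ENNReal.toReal_rpow, ENNReal.toReal_ofReal (sq_nonneg _)]

theorem setIntegral_inversion_image_mul {d : ℝ} (hr : r ≠ 0) (hd : 0 ≤ d) {K : Set P}
    (hK : MeasurableSet K) (hcK : c ∉ K) {φ φs : P → ℝ}
    (hφs : ∀ y ∈ K, φs (inversion c r y) * ((r / dist y c) ^ 2) ^ d = φ y) (g : P → ℝ) :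
    ∫ z in inversion c r '' K, g z * φs z ∂μH[d] = ∫ y in K, g (inversion c r y) * φ y ∂μH[d] := by
  rw [setIntegral_inversion_image hr hd hK hcK]
  refine setIntegral_congr_fun hK fun y hy => ?_
  rw [smul_eq_mul, ← hφs y hy]
  ring

theorem integral_integral_inversion_image_mul_mul {d : ℝ} (hr : r ≠ 0) (hd : 0 ≤ d) {K : Set P}
    (hK : MeasurableSet K) (hcK : c ∉ K) {φ φs ψ ψs : P → ℝ}
    (hφs : ∀ y ∈ K, φs (inversion c r y) * ((r / dist y c) ^ 2) ^ d = φ y)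
    (hψs : ∀ y ∈ K, ψs (inversion c r y) * ((r / dist y c) ^ 2) ^ d = ψ y) (G : P → P → ℝ) :
    ∫ w in inversion c r '' K, ∫ z in inversion c r '' K, G w z * φs w * ψs z ∂μH[d] ∂μH[d] =
      ∫ x in K, ∫ y in K, G (inversion c r x) (inversion c r y) * φ x * ψ y ∂μH[d] ∂μH[d] := by
  have hpull : ∀ (μ : Measure P) (F : P → P → ℝ) (a b : P → ℝ),
      ∫ w, ∫ z, F w z * a w * b z ∂μ ∂μ = ∫ w, (∫ z, F w z * b z ∂μ) * a w ∂μ :=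
    fun μ F a b => integral_congr_ae <| ae_of_all _ fun w => by
      dsimp only
      rw [← integral_mul_const]
      congr 1 with z
      ring
  rw [hpull, hpull]
  simp_rw [setIntegral_inversion_image_mul hr hd hK hcK hψs]
  exact setIntegral_inversion_image_mul hr hd hK hcK hφs _

end EuclideanGeometry

theorem integral_integral_mul_mul_eq_of_ae_eq_add_add {α β : Type*} [MeasurableSpace α]
    [MeasurableSpace β] {μ : Measure α} {ν : Measure β} [SFinite μ] [SFinite ν] {k k' : α → β → ℝ}
    {u φ : α → ℝ} {v ψ : β → ℝ} (hk' : ∀ᵐ x ∂μ, ∀ᵐ y ∂ν, k' x y = k x y + u x + v y)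
    (hk : Integrable (fun q : α × β => k q.1 q.2 * φ q.1 * ψ q.2) (μ.prod ν))
    (hφ : Integrable φ μ) (hψ : Integrable ψ ν) (hvψ : Integrable (fun y => v y * ψ y) ν)
    (hφ0 : ∫ x, φ x ∂μ = 0) (hψ0 : ∫ y, ψ y ∂ν = 0) :
    ∫ x, ∫ y, k' x y * φ x * ψ y ∂ν ∂μ = ∫ x, ∫ y, k x y * φ x * ψ y ∂ν ∂μ := by
  have hinner : ∀ᵐ x ∂μ, ∫ y, k' x y * φ x * ψ y ∂ν =
      ∫ y, k x y * φ x * ψ y ∂ν + φ x * ∫ y, v y * ψ y ∂ν := by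
    filter_upwards [hk', hk.prod_right_ae] with x hx hkx
    have hsplit : ∀ᵐ y ∂ν, k' x y * φ x * ψ y =
        k x y * φ x * ψ y + u x * φ x * ψ y + φ x * (v y * ψ y) :=
      hx.mono fun y hy => by rw [hy]; ring
    have huψ : Integrable (fun y => u x * φ x * ψ y) ν := hψ.const_mul _
    have hkuψ : Integrable (fun y => k x y * φ x * ψ y + u x * φ x * ψ y) ν := hkx.add huψ
    rw [integral_congr_ae hsplit, integral_add hkuψ (hvψ.const_mul _), integral_add hkx huψ,
      integral_const_mul, integral_const_mul, hψ0]
    ring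
  rw [integral_congr_ae hinner, integral_add hk.integral_prod_left (hφ.mul_const _),
    integral_mul_const, hφ0, zero_mul, add_zero]

theorem MeasureTheory.Integrable.log_dist_mul {X : Type*} [MetricSpace X] [MeasurableSpace X]
    [OpensMeasurableSpace X] {μ : Measure X} {K : Set X} {c : X} {ψ : X → ℝ}
    (hψ : Integrable ψ (μ.restrict K)) (hK : IsCompact K) (hcK : c ∉ K) :
    Integrable (fun y => Real.log (dist y c) * ψ y) (μ.restrict K) := by
  obtain ⟨C, hC⟩ := hK.exists_bound_of_continuousOn <|
    (continuous_id.dist continuous_const).continuousOn.log fun y hy =>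
      dist_ne_zero.2 (ne_of_mem_of_not_mem hy hcK)
  exact hψ.bdd_mul (continuous_id.dist continuous_const).measurable.log.aestronglyMeasurable
    ((ae_restrict_mem hK.measurableSet).mono hC)

open EuclideanGeometry

theorem bilinear_form_inversion_invariance_dim2_general
    (r : ℝ) (hr : 0 < r) (Ω : Set (EuclideanSpace ℝ (Fin 2)))
    (hbd : Bornology.IsBounded Ω)
    (h0 : (0 : EuclideanSpace ℝ (Fin 2)) ∉ frontier Ω)
    (T : EuclideanSpace ℝ (Fin 2) → EuclideanSpace ℝ (Fin 2))
    (hT : ∀ x : EuclideanSpace ℝ (Fin 2), x ≠ 0 → T x = (r ^ 2 / ‖x‖ ^ 2) • x)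
    (σ σs : Measure (EuclideanSpace ℝ (Fin 2)))
    (hσ : σ = μH[1].restrict (frontier Ω))
    (hσs : σs = μH[1].restrict (T '' frontier Ω))
    (hfin : σ (frontier Ω) < ⊤)
    (φ ψ : EuclideanSpace ℝ (Fin 2) → ℝ)
    (hφmeas : Measurable φ) (hψmeas : Measurable ψ)
    (hφbdd : ∃ C, ∀ y, |φ y| ≤ C) (hψbdd : ∃ C, ∀ y, |ψ y| ≤ C)
    (hφmean : ∫ y, φ y ∂σ = 0) (hψmean : ∫ y, ψ y ∂σ = 0)
    (φs ψs : EuclideanSpace ℝ (Fin 2) → ℝ)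
    (hφs : ∀ y ∈ frontier Ω, φs (T y) = φ y * ‖y‖ ^ 2 / r ^ 2)
    (hψs : ∀ y ∈ frontier Ω, ψs (T y) = ψ y * ‖y‖ ^ 2 / r ^ 2)
    (hint : Integrable
      (fun q : EuclideanSpace ℝ (Fin 2) × EuclideanSpace ℝ (Fin 2) =>
        (1 / (2 * π)) * Real.log ‖q.1 - q.2‖ * φ q.1 * ψ q.2) (σ.prod σ)) :
    ∫ w, ∫ z, (1 / (2 * π)) * Real.log ‖w - z‖ * φs w * ψs z ∂σs ∂σs =
      ∫ x, ∫ y, (1 / (2 * π)) * Real.log ‖x - y‖ * φ x * ψ y ∂σ ∂σ := by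
  subst hσ hσs
  set K := frontier Ω
  have hK : MeasurableSet K := isClosed_frontier.measurableSet
  have hne : ∀ y ∈ K, y ≠ 0 := fun y hy => ne_of_mem_of_not_mem hy h0
  have hTι : ∀ y ∈ K, T y = inversion 0 r y := fun y hy => by
    simp [hT y (hne y hy), inversion, div_pow]
  have hdensity : ∀ {χ χs : EuclideanSpace ℝ (Fin 2) → ℝ},
      (∀ y ∈ K, χs (T y) = χ y * ‖y‖ ^ 2 / r ^ 2) →
        ∀ y ∈ K, χs (inversion 0 r y) * ((r / dist y 0) ^ 2) ^ (1 : ℝ) = χ y := fun hχs y hy => by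
    have := norm_ne_zero_iff.2 (hne y hy)
    rw [← hTι y hy, hχs y hy, Real.rpow_one, dist_zero_right]
    field_simp
  have : IsFiniteMeasure (μH[1].restrict K) := isFiniteMeasure_restrict.2 (by simpa using hfin.ne)
  have := Measure.nullSingletonClass_hausdorff (EuclideanSpace ℝ (Fin 2)) one_pos
  obtain ⟨Cφ, hCφ⟩ := hφbdd
  obtain ⟨Cψ, hCψ⟩ := hψbdd
  have hψint : Integrable ψ (μH[1].restrict K) :=
    .of_bound hψmeas.aestronglyMeasurable Cψ (ae_of_all _ hCψ)
  rw [image_congr hTι, integral_integral_inversion_image_mul_mul hr.ne' zero_le_one hK h0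
    (hdensity hφs) (hdensity hψs) fun w z => 1 / (2 * π) * Real.log ‖w - z‖]
  refine integral_integral_mul_mul_eq_of_ae_eq_add_add
    (u := fun x => 1 / (2 * π) * (Real.log (r ^ 2) - Real.log (dist x 0)))
    (v := fun y => -(1 / (2 * π)) * Real.log (dist y 0)) ?_ hint
    (.of_bound hφmeas.aestronglyMeasurable Cφ (ae_of_all _ hCφ)) hψint ?_ hφmean hψmean
  · filter_upwards [ae_restrict_mem hK] with x hx
    filter_upwards [ae_restrict_mem hK, Measure.ae_ne _ x] with y hy hyx
    rw [← dist_eq_norm, ← dist_eq_norm,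
      log_dist_inversion_inversion_s10 hr.ne' (hne x hx) (hne y hy) (Ne.symm hyx)]
    ring
  · simpa only [mul_assoc] using (hψint.log_dist_mul
      (Metric.isCompact_of_isClosed_isBounded isClosed_frontier
        (hbd.closure.subset frontier_subset_closure)) h0).const_mul (-(1 / (2 * π)))

/-- The map `φ ↦ φ*` preserves the single-layer bilinear form in two dimensions on
mean-zero densities: `∫∫ Γ(w−z) φ*(w) ψ*(z) dσ*(z) dσ*(w) = ∫∫ Γ(x−y) φ(x) ψ(y) dσ(y) dσ(x)`,
where `Γ(z) = (1/(2π)) log|z|` and `φ*(Ty) = φ(y)|y|²/r²`. -/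
theorem bilinear_form_inversion_invariance_dim2
    (r : ℝ) (hr : 0 < r) (Ω : Set (EuclideanSpace ℝ (Fin 2)))
    (hopen : IsOpen Ω) (hbd : Bornology.IsBounded Ω)
    (h0 : (0 : EuclideanSpace ℝ (Fin 2)) ∉ frontier Ω)
    (T : EuclideanSpace ℝ (Fin 2) → EuclideanSpace ℝ (Fin 2))
    (hT : ∀ x : EuclideanSpace ℝ (Fin 2), x ≠ 0 → T x = (r ^ 2 / ‖x‖ ^ 2) • x)
    (σ σs : Measure (EuclideanSpace ℝ (Fin 2)))
    (hσ : σ = μH[1].restrict (frontier Ω))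
    (hσs : σs = μH[1].restrict (T '' frontier Ω))
    (hfin : σ (frontier Ω) < ⊤)
    (φ ψ : EuclideanSpace ℝ (Fin 2) → ℝ)
    (hφmeas : Measurable φ) (hψmeas : Measurable ψ)
    (hφbdd : ∃ C, ∀ y, |φ y| ≤ C) (hψbdd : ∃ C, ∀ y, |ψ y| ≤ C)
    (hφmean : ∫ y, φ y ∂σ = 0) (hψmean : ∫ y, ψ y ∂σ = 0)
    (φs ψs : EuclideanSpace ℝ (Fin 2) → ℝ)
    (hφs : ∀ y ∈ frontier Ω, φs (T y) = φ y * ‖y‖ ^ 2 / r ^ 2)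
    (hψs : ∀ y ∈ frontier Ω, ψs (T y) = ψ y * ‖y‖ ^ 2 / r ^ 2)
    (hint : Integrable
      (fun q : EuclideanSpace ℝ (Fin 2) × EuclideanSpace ℝ (Fin 2) =>
        (1 / (2 * π)) * Real.log ‖q.1 - q.2‖ * φ q.1 * ψ q.2) (σ.prod σ)) :
    ∫ w, ∫ z, (1 / (2 * π)) * Real.log ‖w - z‖ * φs w * ψs z ∂σs ∂σs =
      ∫ x, ∫ y, (1 / (2 * π)) * Real.log ‖x - y‖ * φ x * ψ y ∂σ ∂σ :=
  bilinear_form_inversion_invariance_dim2_general r hr Ω hbd h0 T hT σ σs hσ hσs hfin φ ψ hφmeas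
    hψmeas hφbdd hψbdd hφmean hψmean φs ψs hφs hψs hint
end
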